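/- arXiv:2404.17516 — 2 statements merged into one kernel-verified Lean document; each statement's English description precedes it below -/
import Mathlib

section
/- There is no subset S of 2^ω with the Baire property that is nonmeager and E₀-monotonic for the pair (<₀, <₁); that is, every nonmeager subset S of 2^ω with the Baire property contains points x, y, u, v with x E₀ y, u E₀ v, x <₀ y, x <₁ y, u <₀ v, and v <₁ u. -/
/-- `E₀`: eventual equality of infinite binary sequences. -/
def E0 (x y : ℕ → Fin 2) : Prop := ∃ n, ∀ m > n, x m = y m

/-- `x <₀ y` iff at the largest differing index `n`, `x n < y n`. -/
def lt0 (x y : ℕ → Fin 2) : Prop :=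
  ∃ n, x n ≠ y n ∧ (∀ m > n, x m = y m) ∧ x n < y n

/-- `x <₁ y` iff at the largest differing index `n`, `x n < y n` when `n` is
odd and `y n < x n` when `n` is even. -/
def lt1 (x y : ℕ → Fin 2) : Prop :=
  ∃ n, x n ≠ y n ∧ (∀ m > n, x m = y m) ∧
    ((Odd n ∧ x n < y n) ∨ (Even n ∧ y n < x n))

open Topology Filter Set

/-- Flip the `n`-th coordinate of a binary sequence. -/
def flipc (n : ℕ) (x : ℕ → Fin 2) : ℕ → Fin 2 :=
  fun m => if m = n then x n + 1 else x m

lemma flipc_apply_self (n : ℕ) (x : ℕ → Fin 2) : flipc n x n = x n + 1 := by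
  simp [flipc]

lemma flipc_apply_ne (n : ℕ) (x : ℕ → Fin 2) {m : ℕ} (h : m ≠ n) :
    flipc n x m = x m := by simp [flipc, h]

lemma flipc_invol (n : ℕ) (x : ℕ → Fin 2) : flipc n (flipc n x) = x := by
  funext m
  by_cases h : m = n
  · subst h
    rw [flipc_apply_self, flipc_apply_self]
    revert x; intro x; generalize x m = a; revert a; decide
  · rw [flipc_apply_ne n _ h, flipc_apply_ne n _ h]

lemma flipc_continuous (n : ℕ) : Continuous (flipc n) := by
  refine continuous_pi fun m => ?_
  by_cases h : m = n
  · subst h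
    have : (fun x : ℕ → Fin 2 => flipc m x m) =
        (fun a : Fin 2 => a + 1) ∘ (fun x : ℕ → Fin 2 => x m) := by
      funext x; simp [flipc]
    rw [this]
    exact (continuous_of_discreteTopology).comp (continuous_apply m)
  · have : (fun x : ℕ → Fin 2 => flipc n x m) = (fun x : ℕ → Fin 2 => x m) := by
      funext x; simp [flipc, h]
    rw [this]
    exact continuous_apply m

/-- The flip as a homeomorphism. -/
def flipH (n : ℕ) : (ℕ → Fin 2) ≃ₜ (ℕ → Fin 2) where
  toFun := flipc n
  invFun := flipc n
  left_inv := flipc_invol n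
  right_inv := flipc_invol n
  continuous_toFun := flipc_continuous n
  continuous_invFun := flipc_continuous n

lemma flip_pair (n : ℕ) (z : ℕ → Fin 2) :
    ∃ a b : ℕ → Fin 2, (a = z ∨ a = flipc n z) ∧ (b = z ∨ b = flipc n z) ∧
      a n ≠ b n ∧ (∀ m, m ≠ n → a m = b m) ∧ a n < b n := by
  have key : ∀ c : Fin 2, (c ≠ c + 1) ∧ (c < c + 1 ∨ c + 1 < c) := by decide
  have hne : z n ≠ flipc n z n := by rw [flipc_apply_self]; exact (key (z n)).1
  have hdiff : ∀ m, m ≠ n → z m = flipc n z m := fun m hm =>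
    (flipc_apply_ne n z hm).symm
  rcases (key (z n)).2 with h | h
  · exact ⟨z, flipc n z, Or.inl rfl, Or.inr rfl, hne,
      hdiff, by rwa [flipc_apply_self]⟩
  · exact ⟨flipc n z, z, Or.inr rfl, Or.inl rfl,
      fun he => hne he.symm, fun m hm => (hdiff m hm).symm,
      by rwa [flipc_apply_self]⟩

/-- No nonmeager set with the Baire property is `E₀`-monotonic for `(<₀, <₁)`:
every nonmeager `S ⊆ 2^ω` with the Baire property contains points
`x E₀ y` on which `<₀` and `<₁` agree, and points `u E₀ v` on which they
disagree. -/
theorem no_nonmeager_monotonic_set (S : Set (ℕ → Fin 2))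
    (hBP : BaireMeasurableSet S) (hS : ¬ IsMeagre S) :
    ∃ x ∈ S, ∃ y ∈ S, ∃ u ∈ S, ∃ v ∈ S,
      E0 x y ∧ E0 u v ∧ lt0 x y ∧ lt1 x y ∧ lt0 u v ∧ lt1 v u := by
  haveI : BaireSpace (ℕ → Fin 2) := BaireSpace.of_t2Space_locallyCompactSpace
  obtain ⟨U, hUo, hUeq⟩ := hBP.residualEq_isOpen
  -- T : the residual set where S and U agree
  set T : Set (ℕ → Fin 2) := {x | x ∈ S ↔ x ∈ U} with hTdef
  have hT : T ∈ residual (ℕ → Fin 2) := by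
    have := Filter.eventuallyEq_set.mp hUeq
    exact this
  -- U is nonempty
  have hUne : U.Nonempty := by
    by_contra hU
    rw [Set.not_nonempty_iff_eq_empty] at hU
    apply hS
    have hsub : S ⊆ Tᶜ := by
      intro x hx hxT
      have : x ∈ U := hxT.mp hx
      simp [hU] at this
    have : IsMeagre Tᶜ := by
      rw [IsMeagre, compl_compl]; exact hT
    exact this.mono hsub
  obtain ⟨z₀, hz₀⟩ := hUne
  obtain ⟨I, u, hIu, hsub⟩ := isOpen_pi_iff.1 hUo z₀ hz₀
  -- The basic clopen cylinder C ⊆ U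
  set C : Set (ℕ → Fin 2) := (I : Set ℕ).pi (fun i => {z₀ i}) with hCdef
  have hCopen : IsOpen C := isOpen_set_pi I.finite_toSet fun i _ => isOpen_discrete _
  have hz₀C : z₀ ∈ C := fun i _ => rfl
  have hCU : C ⊆ U := by
    intro y hy
    apply hsub
    intro i hi
    have : y i = z₀ i := hy i hi
    rw [this]
    exact (hIu i hi).2
  -- two fresh coordinates: n₂ even, n₁ odd, both out of I
  set K : ℕ := I.sup id with hK
  set n₂ : ℕ := 2 * K + 2 with hn₂
  set n₁ : ℕ := 2 * K + 3 with hn₁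
  have hfresh : ∀ i ∈ I, i ≠ n₁ ∧ i ≠ n₂ := by
    intro i hi
    have : i ≤ K := Finset.le_sup (f := id) hi
    omega
  -- C is stable under flipping fresh coordinates
  have hflipC : ∀ n, (∀ i ∈ I, i ≠ n) → ∀ z ∈ C, flipc n z ∈ C := by
    intro n hn z hz i hi
    have : flipc n z i = z i := flipc_apply_ne n z (hn i hi)
    rw [this]
    exact hz i hi
  -- the good residual set
  have hres : T ∩ flipc n₁ ⁻¹' T ∩ flipc n₂ ⁻¹' T ∈ residual (ℕ → Fin 2) := by
    have h1 : flipc n₁ ⁻¹' T ∈ residual (ℕ → Fin 2) :=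
      tendsto_residual_of_isOpenMap (flipH n₁).continuous (flipH n₁).isOpenMap hT
    have h2 : flipc n₂ ⁻¹' T ∈ residual (ℕ → Fin 2) :=
      tendsto_residual_of_isOpenMap (flipH n₂).continuous (flipH n₂).isOpenMap hT
    exact Filter.inter_mem (Filter.inter_mem hT h1) h2
  have hdense : Dense (T ∩ flipc n₁ ⁻¹' T ∩ flipc n₂ ⁻¹' T) :=
    dense_of_mem_residual hres
  obtain ⟨z, hzC, hzT⟩ := hdense.inter_open_nonempty C hCopen ⟨z₀, hz₀C⟩
  -- membership in S of z and its flips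
  have hzS : z ∈ S := hzT.1.1.mpr (hCU hzC)
  have hz1S : flipc n₁ z ∈ S :=
    hzT.1.2.mpr (hCU (hflipC n₁ (fun i hi => (hfresh i hi).1) z hzC))
  have hz2S : flipc n₂ z ∈ S :=
    hzT.2.mpr (hCU (hflipC n₂ (fun i hi => (hfresh i hi).2) z hzC))
  -- build the pairs
  obtain ⟨x, y, hx, hy, hxyne, hxyeq, hxylt⟩ := flip_pair n₁ z
  obtain ⟨a, b, ha, hb, habne, habeq, hablt⟩ := flip_pair n₂ z
  have hxS : x ∈ S := by rcases hx with h | h <;> rw [h] <;> assumption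
  have hyS : y ∈ S := by rcases hy with h | h <;> rw [h] <;> assumption
  have haS : a ∈ S := by rcases ha with h | h <;> rw [h] <;> assumption
  have hbS : b ∈ S := by rcases hb with h | h <;> rw [h] <;> assumption
  have hodd : Odd n₁ := ⟨K + 1, by omega⟩
  have heven : Even n₂ := ⟨K + 1, by omega⟩
  refine ⟨x, hxS, y, hyS, a, haS, b, hbS, ?_, ?_, ?_, ?_, ?_, ?_⟩
  · exact ⟨n₁, fun m hm => hxyeq m (by omega)⟩
  · exact ⟨n₂, fun m hm => habeq m (by omega)⟩
  · exact ⟨n₁, hxyne, fun m hm => hxyeq m (by omega), hxylt⟩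
  · exact ⟨n₁, hxyne, fun m hm => hxyeq m (by omega), Or.inl ⟨hodd, hxylt⟩⟩
  · exact ⟨n₂, habne, fun m hm => habeq m (by omega), hablt⟩
  · exact ⟨n₂, fun h => habne h.symm,
      fun m hm => (habeq m (by omega)).symm, Or.inr ⟨heven, hablt⟩⟩
end

section
/- E₀^ω Borel reduces to E₀(E₀): if (aₖ) is a sequence of natural numbers in which every natural number appears infinitely often, then the map f(x) = (x(a₀), x(a₁), x(a₂), …) is a Borel reduction from E₀^ω to E₀(E₀). -/
/-- `E₀^ω` on `(2^ω)^ω`: `E₀`-equivalent in every coordinate. -/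
def E0pow (x y : ℕ → ℕ → Fin 2) : Prop := ∀ n, E0 (x n) (y n)

/-- `E₀(E₀)` on `(2^ω)^ω`: eventually `E₀`-equivalent coordinatewise. -/
def E0E0 (x y : ℕ → ℕ → Fin 2) : Prop := ∃ N, ∀ n > N, E0 (x n) (y n)

/-- If every natural number appears infinitely often in the sequence `a`, then
`f x = (x (a 0), x (a 1), …)` is a Borel reduction of `E₀^ω` to `E₀(E₀)`. -/
theorem E0pow_reducible_E0E0 (a : ℕ → ℕ)
    (ha : ∀ k, {n | a n = k}.Infinite) :
    Measurable (fun (x : ℕ → ℕ → Fin 2) => fun n => x (a n)) ∧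
    ∀ x y : ℕ → ℕ → Fin 2,
      E0pow x y ↔ E0E0 (fun n => x (a n)) (fun n => y (a n)) := by
  constructor
  · exact measurable_pi_lambda _ fun n => measurable_pi_apply (a n)
  · intro x y
    constructor
    · intro h
      exact ⟨0, fun n _ => h (a n)⟩
    · rintro ⟨N, hN⟩ k
      obtain ⟨n, hn, hnN⟩ := (ha k).exists_gt N
      exact hn ▸ hN n hnN
end
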